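/- arXiv:0809.0078 — 2 statements merged into one kernel-verified Lean document; each statement's English description precedes it below -/
import Mathlib

section
/- Let τ : S_n(ℂ) → S_n(ℂ) be a bi-quantum channel with n ≥ 2. Then for every unit vector x ∈ ℂ^n, ∑_{i=1}^n λ_i(τ(x x^*))² = ‖τ(x x^*)‖_F² ≤ σ_2(τ)² + (1 − σ_2(τ)²)/n. -/
open scoped ComplexOrder
open Matrix Kronecker

/-- Frobenius norm of a complex matrix: `√(tr (X Xᴴ))`. -/
noncomputable def frobNorm {n m : Type*} [Fintype n] [Fintype m]
    (X : Matrix n m ℂ) : ℝ :=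
  Real.sqrt ((X * Xᴴ).trace.re)

/-- Operator norm `σ₁(τ) = ‖τ‖` of a map between spaces of Hermitian matrices,
with respect to the Frobenius norm. -/
noncomputable def opNorm {n m : Type*} [Fintype n] [Fintype m]
    (τ : Matrix n n ℂ → Matrix m m ℂ) : ℝ :=
  sSup {c : ℝ | ∃ X : Matrix n n ℂ, X.IsHermitian ∧ frobNorm X ≤ 1 ∧ c = frobNorm (τ X)}

/-- The second singular value of a map between spaces of Hermitian matrices, via the
Courant–Fischer min-max characterization: the infimum over nonzero Hermitian `U` of the
norm of `τ` restricted to the orthogonal complement of `U`. -/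
noncomputable def sigma2 {n m : Type*} [Fintype n] [Fintype m]
    (τ : Matrix n n ℂ → Matrix m m ℂ) : ℝ :=
  sInf {c : ℝ | ∃ U : Matrix n n ℂ, U.IsHermitian ∧ U ≠ 0 ∧
    c = sSup {d : ℝ | ∃ X : Matrix n n ℂ, X.IsHermitian ∧ frobNorm X ≤ 1 ∧
      (U * X).trace.re = 0 ∧ d = frobNorm (τ X)}}

/-- Largest eigenvalue `λ₁` of a Hermitian matrix (junk value `0` otherwise). -/
noncomputable def lambdaMax {n : Type*} [Fintype n] [DecidableEq n]
    (Y : Matrix n n ℂ) : ℝ :=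
  if hY : Y.IsHermitian then ⨆ i, hY.eigenvalues i else 0

/-- von Neumann entropy `H(Y) = -∑ λᵢ log λᵢ` of a Hermitian matrix
(junk value `0` otherwise); note `Real.log 0 = 0`. -/
noncomputable def entropy {n : Type*} [Fintype n] [DecidableEq n]
    (Y : Matrix n n ℂ) : ℝ :=
  if hY : Y.IsHermitian then -∑ i, hY.eigenvalues i * Real.log (hY.eigenvalues i) else 0

/-- Minimum output entropy of a channel: the infimum of `H(τ X)` over density matrices `X`. -/
noncomputable def minEntropy {n m : Type*} [Fintype n] [DecidableEq n] [Fintype m] [DecidableEq m]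
    (τ : Matrix n n ℂ → Matrix m m ℂ) : ℝ :=
  sInf {h : ℝ | ∃ X : Matrix n n ℂ, X.PosSemidef ∧ X.trace = 1 ∧ h = entropy (τ X)}

/-- Eigenvalues of a Hermitian matrix arranged in decreasing order:
`eigsDesc Y 0 = λ₁ ≥ eigsDesc Y 1 = λ₂ ≥ …` (junk value `0` if not Hermitian). -/
noncomputable def eigsDesc {n : ℕ} (Y : Matrix (Fin n) (Fin n) ℂ) : Fin n → ℝ :=
  if hY : Y.IsHermitian then fun i => hY.eigenvalues (Tuple.sort hY.eigenvalues i.rev)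
  else fun _ => 0

/-- The sum `λ₁ + ⋯ + λ_k` of the `k` largest eigenvalues of a Hermitian matrix. -/
noncomputable def sumTopEigs {n : ℕ} (k : ℕ) (Y : Matrix (Fin n) (Fin n) ℂ) : ℝ :=
  ∑ i : Fin n, if (i : ℕ) < k then eigsDesc Y i else 0

/-!
The Kraus conditions `∑ Aᵢᴴ Aᵢ = 1` and `∑ Aᵢ Aᵢᴴ = 1` make `τ X = ∑ Aᵢ X Aᵢᴴ` trace preserving
and unital, and (by Cauchy–Schwarz) a contraction for the Frobenius norm.
Split `x xᴴ = 1/n + Z` with `Z` traceless; then `‖Z‖² = 1 - 1/n` and, since `τ Z` is again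
traceless, `‖τ (x xᴴ)‖² = 1/n + ‖τ Z‖²`. It remains to see `‖τ Z‖ ≤ σ₂(τ) ‖Z‖`: for every `U` the
plane spanned by `1` and `Z` contains a unit vector `X ⊥ U`, and `τ` fixes the `1`-component of
`X` while shrinking its `Z`-component by the factor `‖τ Z‖ / ‖Z‖ ≤ 1`, so `‖τ X‖ ≥ ‖τ Z‖ / ‖Z‖`.
-/

section Frobenius

variable {m n : Type*} [Fintype m] [Fintype n]

lemma Matrix.re_trace_mul_conjTranspose_nonneg (X : Matrix m n ℂ) : 0 ≤ (X * Xᴴ).trace.re :=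
  (Complex.nonneg_iff.mp (posSemidef_self_mul_conjTranspose X).trace_nonneg).1

lemma frobNorm_sq (X : Matrix m n ℂ) : frobNorm X ^ 2 = (X * Xᴴ).trace.re :=
  Real.sq_sqrt (re_trace_mul_conjTranspose_nonneg X)

lemma frobNorm_nonneg (X : Matrix m n ℂ) : 0 ≤ frobNorm X := Real.sqrt_nonneg _

lemma frobNorm_pos {X : Matrix m n ℂ} (hX : X ≠ 0) : 0 < frobNorm X := by
  have h := (posSemidef_self_mul_conjTranspose X).trace_nonneg
  refine Real.sqrt_pos.mpr ((Complex.nonneg_iff.mp h).1.lt_of_ne fun hre => hX ?_)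
  rw [← trace_mul_conjTranspose_self_eq_zero_iff]
  exact Complex.ext hre.symm (Complex.nonneg_iff.mp h).2.symm

lemma Matrix.two_mul_re_trace_conjTranspose_mul_le (P Q : Matrix m n ℂ) :
    2 * (Pᴴ * Q).trace.re ≤ (Pᴴ * P).trace.re + (Qᴴ * Q).trace.re := by
  have h := re_trace_mul_conjTranspose_nonneg (P - Q)ᴴ
  have hQP : (Qᴴ * P).trace.re = (Pᴴ * Q).trace.re := by
    rw [← conjTranspose_conjTranspose P, ← conjTranspose_mul, trace_conjTranspose,
      conjTranspose_conjTranspose, Complex.star_def, Complex.conj_re]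
  simp only [conjTranspose_conjTranspose, conjTranspose_sub, Matrix.sub_mul, Matrix.mul_sub,
    trace_sub, Complex.sub_re, hQP] at h
  linarith

variable [DecidableEq m]

lemma frobNorm_smul_one_add_smul_sq {W : Matrix m m ℂ} (hW : W.trace = 0) (a b : ℝ) :
    frobNorm ((a : ℂ) • 1 + (b : ℂ) • W) ^ 2 =
      a ^ 2 * Fintype.card m + b ^ 2 * frobNorm W ^ 2 := by
  have hW' : Wᴴ.trace = 0 := by rw [trace_conjTranspose, hW, star_zero]
  rw [frobNorm_sq, frobNorm_sq]
  simp [conjTranspose_add, conjTranspose_smul, add_mul, mul_add, trace_add, trace_smul, hW, hW']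
  ring

lemma Matrix.IsHermitian.re_trace_mul_self {Y : Matrix m m ℂ} (hY : Y.IsHermitian) :
    (Y * Y).trace.re = ∑ i, hY.eigenvalues i ^ 2 := by
  conv_lhs => rw [hY.spectral_theorem, ← map_mul, Unitary.conjStarAlgAut_apply, trace_mul_cycle,
    Unitary.coe_star_mul_self, Matrix.one_mul, diagonal_mul_diagonal, trace_diagonal]
  simp [sq]

lemma Matrix.IsHermitian.frobNorm_sq {Y : Matrix m m ℂ} (hY : Y.IsHermitian) :
    frobNorm Y ^ 2 = ∑ i, hY.eigenvalues i ^ 2 := by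
  rw [_root_.frobNorm_sq, hY.eq, hY.re_trace_mul_self]

end Frobenius

lemma sum_comp_eigsDesc {n : ℕ} {Y : Matrix (Fin n) (Fin n) ℂ} (hY : Y.IsHermitian)
    (f : ℝ → ℝ) : ∑ i, f (eigsDesc Y i) = ∑ i, f (hY.eigenvalues i) := by
  rw [eigsDesc, dif_pos hY]
  exact Fintype.sum_equiv (Fin.revPerm.trans (Tuple.sort hY.eigenvalues)) _ _ fun _ => rfl

lemma exists_sq_add_sq_eq_one_and_mul_add_mul_eq_zero (α β : ℝ) :
    ∃ a b : ℝ, a ^ 2 + b ^ 2 = 1 ∧ a * α + b * β = 0 := by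
  rcases eq_or_ne (α ^ 2 + β ^ 2) 0 with h | h
  · have hα : α = 0 := by nlinarith [sq_nonneg α, sq_nonneg β]
    exact ⟨1, 0, by norm_num, by simp [hα]⟩
  · have hr : √(α ^ 2 + β ^ 2) ^ 2 = α ^ 2 + β ^ 2 := Real.sq_sqrt (by positivity)
    have hr0 : √(α ^ 2 + β ^ 2) ≠ 0 := by positivity
    exact ⟨β / √(α ^ 2 + β ^ 2), -α / √(α ^ 2 + β ^ 2), by field_simp; linarith,
      by field_simp; ring⟩

section KrausMap

variable {ι m : Type*} [Fintype ι] [Fintype m] (A : ι → Matrix m m ℂ)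

def krausMap : Matrix m m ℂ →ₗ[ℂ] Matrix m m ℂ where
  toFun X := ∑ i, A i * X * (A i)ᴴ
  map_add' X Y := by simp only [Matrix.mul_add, Matrix.add_mul, Finset.sum_add_distrib]
  map_smul' c X := by simp [Finset.smul_sum]

lemma krausMap_apply (X : Matrix m m ℂ) : krausMap A X = ∑ i, A i * X * (A i)ᴴ := rfl

variable {A}

lemma Matrix.IsHermitian.krausMap {X : Matrix m m ℂ} (hX : X.IsHermitian) :
    (krausMap A X).IsHermitian := by
  simp [IsHermitian, krausMap_apply, conjTranspose_sum, hX.eq, Matrix.mul_assoc]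

lemma trace_krausMap_mul_conjTranspose (X : Matrix m m ℂ) :
    (krausMap A X * (krausMap A X)ᴴ).trace =
      ∑ i, ∑ j, (((A i)ᴴ * A j * X)ᴴ * (X * (A i)ᴴ * A j)).trace := by
  simp_rw [krausMap_apply, conjTranspose_sum, Finset.sum_mul, Finset.mul_sum, trace_sum]
  refine Finset.sum_congr rfl fun i _ => Finset.sum_congr rfl fun j _ => ?_
  rw [show A i * X * (A i)ᴴ * (A j * X * (A j)ᴴ)ᴴ = (A i * X * (A i)ᴴ * A j) * (Xᴴ * (A j)ᴴ) by
    simp [Matrix.mul_assoc], trace_mul_comm]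
  simp [Matrix.mul_assoc]

variable [DecidableEq m]

lemma krausMap_one (hA' : ∑ i, A i * (A i)ᴴ = 1) : krausMap A 1 = 1 := by
  simpa [krausMap_apply] using hA'

lemma trace_krausMap (hA : ∑ i, (A i)ᴴ * A i = 1) (X : Matrix m m ℂ) :
    (krausMap A X).trace = X.trace := by
  simp_rw [krausMap_apply, trace_sum, trace_mul_cycle _ X, ← trace_sum, ← Finset.sum_mul, hA,
    Matrix.one_mul]

lemma sum_trace_mul_mul_conjTranspose (hA' : ∑ i, A i * (A i)ᴴ = 1)
    (M : Matrix m m ℂ) : ∑ i, (M * (A i * (A i)ᴴ)).trace = M.trace := by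
  rw [← trace_sum, ← Finset.mul_sum, hA', Matrix.mul_one]

/-- Sum `2 Re tr (Pᴴ Q) ≤ tr (Pᴴ P) + tr (Qᴴ Q)` over `i, j` for `P = Aᵢᴴ Aⱼ X`, `Q = X Aᵢᴴ Aⱼ`:
the left side adds up to `2 ‖τ X‖²`, and each sum on the right collapses to `‖X‖²`. -/
lemma frobNorm_krausMap_le (hA : ∑ i, (A i)ᴴ * A i = 1)
    (hA' : ∑ i, A i * (A i)ᴴ = 1) (X : Matrix m m ℂ) : frobNorm (krausMap A X) ≤ frobNorm X := by
  have hP : ∑ i, ∑ j, (((A i)ᴴ * A j * X)ᴴ * ((A i)ᴴ * A j * X)).trace = (X * Xᴴ).trace := by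
    have h : ∀ i j, (((A i)ᴴ * A j * X)ᴴ * ((A i)ᴴ * A j * X)).trace =
        (A j * (X * Xᴴ) * (A j)ᴴ * (A i * (A i)ᴴ)).trace := fun i j => by
      rw [show ((A i)ᴴ * A j * X)ᴴ * ((A i)ᴴ * A j * X) = (Xᴴ * (A j)ᴴ * (A i * (A i)ᴴ)) * (A j * X)
        by simp [conjTranspose_mul, Matrix.mul_assoc], trace_mul_comm]
      simp [Matrix.mul_assoc]
    simp_rw [h]
    rw [Finset.sum_comm]
    simp_rw [sum_trace_mul_mul_conjTranspose hA', ← trace_sum, ← krausMap_apply, trace_krausMap hA]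
  have hQ : ∑ i, ∑ j, ((X * (A i)ᴴ * A j)ᴴ * (X * (A i)ᴴ * A j)).trace = (X * Xᴴ).trace := by
    have h : ∀ i j, ((X * (A i)ᴴ * A j)ᴴ * (X * (A i)ᴴ * A j)).trace =
        (A i * (Xᴴ * X) * (A i)ᴴ * (A j * (A j)ᴴ)).trace := fun i j => by
      rw [show (X * (A i)ᴴ * A j)ᴴ * (X * (A i)ᴴ * A j) = (A j)ᴴ * (A i * (Xᴴ * X) * (A i)ᴴ * A j)
        by simp [conjTranspose_mul, Matrix.mul_assoc], trace_mul_comm]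
      simp [Matrix.mul_assoc]
    simp_rw [h, sum_trace_mul_mul_conjTranspose hA', ← trace_sum, ← krausMap_apply,
      trace_krausMap hA, trace_mul_comm Xᴴ]
  have hsum := Finset.sum_le_sum fun i (_ : i ∈ Finset.univ) => Finset.sum_le_sum
    fun j (_ : j ∈ Finset.univ) => two_mul_re_trace_conjTranspose_mul_le
      ((A i)ᴴ * A j * X) (X * (A i)ᴴ * A j)
  simp only [← Finset.mul_sum, Finset.sum_add_distrib, ← Complex.re_sum, hP, hQ] at hsum
  refine Real.sqrt_le_sqrt ?_
  rw [trace_krausMap_mul_conjTranspose]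
  linarith

lemma bddAbove_frobNorm_krausMap (hA : ∑ i, (A i)ᴴ * A i = 1) (hA' : ∑ i, A i * (A i)ᴴ = 1)
    (U : Matrix m m ℂ) :
    BddAbove {d : ℝ | ∃ X : Matrix m m ℂ, X.IsHermitian ∧ frobNorm X ≤ 1 ∧
      (U * X).trace.re = 0 ∧ d = frobNorm (krausMap A X)} :=
  ⟨1, by rintro _ ⟨X, -, hX, -, rfl⟩; exact (frobNorm_krausMap_le hA hA' X).trans hX⟩

lemma exists_orthogonal_div_frobNorm_le_frobNorm_krausMap (hA : ∑ i, (A i)ᴴ * A i = 1)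
    (hA' : ∑ i, A i * (A i)ᴴ = 1) {Z : Matrix m m ℂ} (hZ : Z.IsHermitian) (hZ0 : Z.trace = 0)
    (hZne : Z ≠ 0) (U : Matrix m m ℂ) :
    ∃ X : Matrix m m ℂ, X.IsHermitian ∧ frobNorm X ≤ 1 ∧ (U * X).trace.re = 0 ∧
      frobNorm (krausMap A Z) / frobNorm Z ≤ frobNorm (krausMap A X) := by
  have : Nonempty m := by
    by_contra h
    rw [not_nonempty_iff] at h
    exact hZne (Subsingleton.elim _ _)
  have hN : 0 < (Fintype.card m : ℝ) := by exact_mod_cast Fintype.card_pos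
  have hr := frobNorm_pos hZne
  have hsN := Real.sq_sqrt hN.le
  have hsN0 : √(Fintype.card m : ℝ) ≠ 0 := by positivity
  have hρ : frobNorm (krausMap A Z) / frobNorm Z ≤ 1 :=
    div_le_one_of_le₀ (frobNorm_krausMap_le hA hA' Z) hr.le
  have hτZ0 : (krausMap A Z).trace = 0 := by rw [trace_krausMap hA, hZ0]
  -- `a`, `b` are the coordinates of `X` in the orthonormal pair `1 / √N`, `Z / ‖Z‖`.
  obtain ⟨a, b, hab, horth⟩ := exists_sq_add_sq_eq_one_and_mul_add_mul_eq_zero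
    ((U.trace).re / √(Fintype.card m : ℝ)) ((U * Z).trace.re / frobNorm Z)
  set p := a / √(Fintype.card m : ℝ)
  set q := b / frobNorm Z
  have hp : p ^ 2 * Fintype.card m = a ^ 2 := by
    rw [div_pow, hsN]; field_simp
  have hq : ∀ t, q ^ 2 * (t * frobNorm Z) ^ 2 = b ^ 2 * t ^ 2 := fun t => by
    rw [div_pow]; field_simp
  refine ⟨(p : ℂ) • 1 + (q : ℂ) • Z, ?_, ?_, ?_, ?_⟩
  · exact (isHermitian_one.smul (Complex.conj_ofReal p)).add (hZ.smul (Complex.conj_ofReal q))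
  · have h : frobNorm ((p : ℂ) • 1 + (q : ℂ) • Z) ^ 2 = 1 := by
      rw [frobNorm_smul_one_add_smul_sq hZ0, hp, ← one_mul (frobNorm Z), hq, one_pow, mul_one, hab]
    exact (pow_le_one_iff_of_nonneg (frobNorm_nonneg _) two_ne_zero).mp h.le
  · simp only [Matrix.mul_add, Matrix.mul_smul, Matrix.mul_one, trace_add, trace_smul,
      smul_eq_mul, Complex.add_re, Complex.re_ofReal_mul]
    rw [← horth]
    ring
  · set ρ := frobNorm (krausMap A Z) / frobNorm Z
    have hτZ : frobNorm (krausMap A Z) = ρ * frobNorm Z := (div_mul_cancel₀ _ hr.ne').symm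
    have h : frobNorm (krausMap A ((p : ℂ) • 1 + (q : ℂ) • Z)) ^ 2 = a ^ 2 + b ^ 2 * ρ ^ 2 := by
      rw [map_add, map_smul, map_smul, krausMap_one hA', frobNorm_smul_one_add_smul_sq hτZ0, hp,
        hτZ, hq]
    refine le_of_pow_le_pow_left₀ two_ne_zero (frobNorm_nonneg _) ?_
    rw [h]
    have hρ2 : ρ ^ 2 ≤ 1 := pow_le_one₀ (div_nonneg (frobNorm_nonneg _) hr.le) hρ
    nlinarith [sq_nonneg b]

lemma frobNorm_krausMap_le_sigma2_mul (hA : ∑ i, (A i)ᴴ * A i = 1) (hA' : ∑ i, A i * (A i)ᴴ = 1)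
    {Z : Matrix m m ℂ} (hZ : Z.IsHermitian) (hZ0 : Z.trace = 0) :
    frobNorm (krausMap A Z) ≤ sigma2 (krausMap A) * frobNorm Z := by
  rcases eq_or_ne Z 0 with rfl | hZne
  · simp [frobNorm]
  rw [← div_le_iff₀ (frobNorm_pos hZne), sigma2]
  refine le_csInf ⟨_, Z, hZ, hZne, rfl⟩ ?_
  rintro _ ⟨U, -, -, rfl⟩
  obtain ⟨X, hX, hX1, hUX, hle⟩ :=
    exists_orthogonal_div_frobNorm_le_frobNorm_krausMap hA hA' hZ hZ0 hZne U
  exact hle.trans (le_csSup (bddAbove_frobNorm_krausMap hA hA' U) ⟨X, hX, hX1, hUX, rfl⟩)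

lemma frobNorm_krausMap_sq_le [Nonempty m] (hA : ∑ i, (A i)ᴴ * A i = 1)
    (hA' : ∑ i, A i * (A i)ᴴ = 1) {P : Matrix m m ℂ} (hP : P.IsHermitian) (htr : P.trace = 1) :
    frobNorm (krausMap A P) ^ 2 ≤ (Fintype.card m : ℝ)⁻¹ +
      sigma2 (krausMap A) ^ 2 * (frobNorm P ^ 2 - (Fintype.card m : ℝ)⁻¹) := by
  have hN : (Fintype.card m : ℝ) ≠ 0 := by positivity
  set c : ℝ := (Fintype.card m : ℝ)⁻¹
  have hc : c ^ 2 * Fintype.card m = c := by simp only [c]; field_simp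
  set Z := P - (c : ℂ) • 1
  have hPZ : P = (c : ℂ) • 1 + ((1 : ℝ) : ℂ) • Z := by simp [Z]
  have hZ : Z.IsHermitian := hP.sub (isHermitian_one.smul (Complex.conj_ofReal c))
  have hZ0 : Z.trace = 0 := by simp [Z, htr, c]
  have hτZ0 : (krausMap A Z).trace = 0 := by rw [trace_krausMap hA, hZ0]
  have hP2 : frobNorm P ^ 2 = c + frobNorm Z ^ 2 := by
    rw [hPZ, frobNorm_smul_one_add_smul_sq hZ0, hc, one_pow, one_mul]
  have hτP2 : frobNorm (krausMap A P) ^ 2 = c + frobNorm (krausMap A Z) ^ 2 := by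
    rw [hPZ, map_add, map_smul, map_smul, krausMap_one hA', frobNorm_smul_one_add_smul_sq hτZ0,
      hc, one_pow, one_mul]
  have hτZ := frobNorm_krausMap_le_sigma2_mul hA hA' hZ hZ0
  rw [hτP2, hP2, add_sub_cancel_left, ← mul_pow]
  gcongr
  exact frobNorm_nonneg _

end KrausMap

/-- Let τ : Sₙ(ℂ) → Sₙ(ℂ) be a bi-quantum channel with n ≥ 2.  Then for
every unit vector x ∈ ℂⁿ, ∑ᵢ λᵢ(τ(x x*))² = ‖τ(x x*)‖_F² ≤ σ₂(τ)² + (1 - σ₂(τ)²)/n. -/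
theorem stmt_17 {n l : ℕ} (hn : 2 ≤ n) (A : Fin l → Matrix (Fin n) (Fin n) ℂ)
    (hA : ∑ i, (A i)ᴴ * A i = 1) (hA' : ∑ i, A i * (A i)ᴴ = 1)
    (x : Fin n → ℂ) (hx : star x ⬝ᵥ x = 1)
    (Y : Matrix (Fin n) (Fin n) ℂ)
    (hY : Y = ∑ i, A i * Matrix.vecMulVec x (star x) * (A i)ᴴ)
    (s : ℝ) (hs : s = sigma2 (fun X => ∑ i, A i * X * (A i)ᴴ)) :
    (∑ i, (eigsDesc Y i) ^ 2) = frobNorm Y ^ 2 ∧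
    frobNorm Y ^ 2 ≤ s ^ 2 + (1 - s ^ 2) / n := by
  have : Nonempty (Fin n) := ⟨⟨0, by omega⟩⟩
  set P := vecMulVec x (star x)
  have hP : P.IsHermitian := (posSemidef_vecMulVec_self_star x).isHermitian
  have hPtr : P.trace = 1 := by rw [trace_vecMulVec, dotProduct_comm, hx]
  have hP1 : frobNorm P ^ 2 = 1 := by
    rw [frobNorm_sq, hP.eq, vecMulVec_mul_vecMulVec, hx, one_smul, hPtr, Complex.one_re]
  have hYP : Y = krausMap A P := hY
  have hYH : Y.IsHermitian := hYP ▸ hP.krausMap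
  refine ⟨(sum_comp_eigsDesc hYH (· ^ 2)).trans hYH.frobNorm_sq.symm, ?_⟩
  have h := frobNorm_krausMap_sq_le hA hA' hP hPtr
  rw [← hYP, ← show s = sigma2 (krausMap A) from hs, hP1, Fintype.card_fin] at h
  calc frobNorm Y ^ 2 ≤ (n : ℝ)⁻¹ + s ^ 2 * (1 - (n : ℝ)⁻¹) := h
    _ = s ^ 2 + (1 - s ^ 2) / n := by ring
end

section
/- Let τ : S_n(ℂ) → S_n(ℂ) be a unitary quantum channel, τ(X) = ∑_{i=1}^l t_i² Q_i X Q_i^*, with l ≥ 3, t_i ≠ 0 for all i, Q_1 = I_n, the Q_i unitary with ∑_{i=1}^l t_i² = 1, and suppose Q_2,…,Q_l have no common invariant subspace of ℂ^n other than {0} and ℂ^n. Then σ_2(τ) < σ_1(τ) = 1. -/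
open scoped ComplexOrder
open Matrix Kronecker

/-!
The channel `τ` is a contraction for the Frobenius norm (triangle inequality and unitary
invariance) and fixes the identity, so `σ₁(τ) = 1`. Testing the min–max definition of `σ₂` with
`U = I` bounds `σ₂(τ)` by the maximum of `‖τ X‖` over the compact set of traceless Hermitian `X`
with `‖X‖ ≤ 1`. If that maximum were `1`, attained at `X`, equality in the triangle inequality
(strict convexity of the Euclidean norm) would force `Qᵢ X Qᵢ* = τ X` for every `i`, hence
`= X` because `Q₁ = I`. Then `X` commutes with `Q₂, …, Q_l`, so it is scalar by Schur's lemma,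
and a traceless Hermitian scalar matrix is `0`, contradicting `‖X‖ = 1`.
-/

open scoped InnerProductSpace

theorem eq_sum_smul_of_norm_le_norm_sum {𝕜 E ι : Type*} [RCLike 𝕜] [NormedAddCommGroup E]
    [InnerProductSpace 𝕜 E] {s : Finset ι} {w : ι → ℝ} {a : ι → E}
    (hw : ∀ i ∈ s, 0 < w i) (hw1 : ∑ i ∈ s, w i = 1)
    (ha : ∀ i ∈ s, ‖a i‖ ≤ ‖∑ j ∈ s, (w j : 𝕜) • a j‖) {i : ι} (hi : i ∈ s) :
    a i = ∑ j ∈ s, (w j : 𝕜) • a j := by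
  set B := ∑ j ∈ s, (w j : 𝕜) • a j
  have hle : ∀ j ∈ s, RCLike.re ⟪a j, B⟫_𝕜 ≤ ‖B‖ ^ 2 := fun j hj =>
    (re_inner_le_norm _ _).trans (by rw [sq]; gcongr; exact ha j hj)
  have hB : ‖B‖ ^ 2 = ∑ j ∈ s, w j * RCLike.re ⟪a j, B⟫_𝕜 :=
    calc ‖B‖ ^ 2 = RCLike.re ⟪∑ j ∈ s, (w j : 𝕜) • a j, B⟫_𝕜 := norm_sq_eq_re_inner B
      _ = _ := by simp [sum_inner, inner_smul_left]
  have hgap : ∑ j ∈ s, w j * (‖B‖ ^ 2 - RCLike.re ⟪a j, B⟫_𝕜) = 0 := by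
    simp only [mul_sub, Finset.sum_sub_distrib, ← Finset.sum_mul, hw1, one_mul, ← hB, sub_self]
  have hi0 := (Finset.sum_eq_zero_iff_of_nonneg fun j hj =>
    mul_nonneg (hw j hj).le (sub_nonneg.2 (hle j hj))).1 hgap i hi
  refine eq_of_norm_le_re_inner_eq_norm_sq (𝕜 := 𝕜) (ha i hi) ?_
  rcases mul_eq_zero.1 hi0 with h | h
  · exact absurd h (hw i hi).ne'
  · linarith

section Frobenius

variable {m n : Type*}

def toEuclideanSpace : Matrix m n ℂ ≃ₗ[ℂ] EuclideanSpace ℂ (m × n) where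
  toFun X := WithLp.toLp 2 fun p => X p.1 p.2
  invFun y := Matrix.of fun i j => y (i, j)
  map_add' _ _ := rfl
  map_smul' _ _ := rfl
  left_inv _ := rfl
  right_inv _ := rfl

@[simp]
theorem toEuclideanSpace_apply (X : Matrix m n ℂ) (p : m × n) :
    toEuclideanSpace X p = X p.1 p.2 :=
  rfl

variable [Fintype m] [Fintype n]

theorem frobNorm_eq_norm_toEuclideanSpace (X : Matrix m n ℂ) :
    frobNorm X = ‖toEuclideanSpace X‖ := by
  rw [frobNorm, EuclideanSpace.norm_eq, Fintype.sum_prod_type]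
  congr 1
  simp [Matrix.trace, Matrix.mul_apply, Complex.mul_conj, Complex.sq_norm]

theorem continuous_frobNorm : Continuous (frobNorm : Matrix m n ℂ → ℝ) :=
  Real.continuous_sqrt.comp <| Complex.continuous_re.comp <|
    (continuous_id.matrix_mul continuous_id.matrix_conjTranspose).matrix_trace

theorem frobNorm_mul_mul_conjTranspose [DecidableEq n] {Q : Matrix m n ℂ} (hQ : Qᴴ * Q = 1)
    (X : Matrix n n ℂ) : frobNorm (Q * X * Qᴴ) = frobNorm X := by
  have h : (Q * X * Qᴴ) * (Q * X * Qᴴ)ᴴ = Q * (X * Xᴴ) * Qᴴ := by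
    simp only [conjTranspose_mul, conjTranspose_conjTranspose, Matrix.mul_assoc]
    rw [← Matrix.mul_assoc Qᴴ Q, hQ, Matrix.one_mul]
  rw [frobNorm, frobNorm, h, trace_mul_cycle, hQ, Matrix.one_mul]

theorem frobNorm_real_smul_one [DecidableEq n] (c : ℝ) :
    frobNorm ((c : ℂ) • (1 : Matrix n n ℂ)) = |c| * √(Fintype.card n) := by
  rw [← Real.sqrt_mul_self_eq_abs, ← Real.sqrt_mul (mul_self_nonneg c), frobNorm]
  simp [Matrix.trace_one, mul_assoc]

end Frobenius

section Schur

variable {ι n : Type*} [Fintype n] [DecidableEq n]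

theorem Matrix.commute_of_mul_mul_conjTranspose_eq {α : Type*} [Semiring α] [Star α]
    {Q X : Matrix n n α} (hQ : Qᴴ * Q = 1) (h : Q * X * Qᴴ = X) : Commute Q X :=
  calc Q * X = Q * X * (Qᴴ * Q) := by rw [hQ, Matrix.mul_one]
    _ = X * Q := by rw [← Matrix.mul_assoc, h]

theorem Matrix.exists_eq_smul_one_of_forall_commute [Nonempty n] {Q : ι → Matrix n n ℂ}
    (hirr : ∀ V : Submodule ℂ (n → ℂ), (∀ i, ∀ v ∈ V, Q i *ᵥ v ∈ V) → V = ⊥ ∨ V = ⊤)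
    {X : Matrix n n ℂ} (hX : ∀ i, Commute (Q i) X) : ∃ c : ℂ, X = c • 1 := by
  set f : Module.End ℂ (n → ℂ) := mulVecLin X
  obtain ⟨μ, hμ⟩ := Module.End.exists_eigenvalue f
  have hmem : ∀ v, v ∈ f.eigenspace μ ↔ X *ᵥ v = μ • v := fun v =>
    Module.End.mem_eigenspace_iff
  have hinv : ∀ i, ∀ v ∈ f.eigenspace μ, Q i *ᵥ v ∈ f.eigenspace μ := by
    intro i v hv
    rw [hmem] at hv ⊢
    rw [mulVec_mulVec, ← (hX i).eq, ← mulVec_mulVec, hv, mulVec_smul]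
  rcases hirr _ hinv with hbot | htop
  · exact absurd hbot (Module.End.hasEigenvalue_iff.1 hμ)
  · refine ⟨μ, ext_iff_mulVec.2 fun v => ?_⟩
    rw [(hmem v).1 (htop ▸ Submodule.mem_top), smul_mulVec, one_mulVec]

theorem Matrix.IsHermitian.eq_zero_of_forall_commute [Nonempty n] {Q : ι → Matrix n n ℂ}
    (hirr : ∀ V : Submodule ℂ (n → ℂ), (∀ i, ∀ v ∈ V, Q i *ᵥ v ∈ V) → V = ⊥ ∨ V = ⊤)
    {X : Matrix n n ℂ} (hX : X.IsHermitian) (htr : X.trace.re = 0)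
    (hcomm : ∀ i, Commute (Q i) X) : X = 0 := by
  obtain ⟨c, rfl⟩ := exists_eq_smul_one_of_forall_commute hirr hcomm
  obtain ⟨i⟩ := ‹Nonempty n›
  have hc : star c = c := by simpa using hX.apply i i
  have hre : c.re = 0 := by
    simpa [Matrix.trace_one, Fintype.card_ne_zero] using htr
  have : c = 0 := Complex.ext hre (by simpa [hre] using (Complex.conj_eq_iff_im.1 hc))
  simp [this]

end Schur

section SingularValues

variable {m n : Type*} [Fintype m] [Fintype n]

variable (n) in
def tracelessHermitianBall : Set (Matrix n n ℂ) :=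
  {X | X.IsHermitian ∧ frobNorm X ≤ 1 ∧ X.trace.re = 0}

theorem isCompact_tracelessHermitianBall : IsCompact (tracelessHermitianBall n) := by
  have hclosed : IsClosed (tracelessHermitianBall n) :=
    (isClosed_eq continuous_id.matrix_conjTranspose continuous_id).inter
      ((isClosed_le continuous_frobNorm continuous_const).inter
        (isClosed_eq (Complex.continuous_re.comp continuous_id.matrix_trace) continuous_const))
  have hball : tracelessHermitianBall n ⊆ toEuclideanSpace.symm '' Metric.closedBall 0 1 := by
    rintro X ⟨-, hX, -⟩
    refine ⟨toEuclideanSpace X, ?_, toEuclideanSpace.symm_apply_apply X⟩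
    rwa [mem_closedBall_zero_iff, ← frobNorm_eq_norm_toEuclideanSpace]
  exact ((isCompact_closedBall 0 1).image (LinearMap.continuous_of_finiteDimensional _))
    |>.of_isClosed_subset hclosed hball

theorem sigma2_le_sSup_image_tracelessHermitianBall [DecidableEq n] [Nonempty n]
    (τ : Matrix n n ℂ → Matrix m m ℂ) :
    sigma2 τ ≤ sSup ((fun X => frobNorm (τ X)) '' tracelessHermitianBall n) := by
  refine csInf_le ⟨0, ?_⟩ ⟨1, isHermitian_one, one_ne_zero, ?_⟩
  · rintro c ⟨U, -, -, rfl⟩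
    refine Real.sSup_nonneg ?_
    rintro d ⟨X, -, -, -, rfl⟩
    exact Real.sqrt_nonneg _
  · congr 1
    ext d
    simp [tracelessHermitianBall, eq_comm, and_assoc]

theorem opNorm_eq_one_of_frobNorm_le {τ : Matrix n n ℂ → Matrix m m ℂ}
    (hτ : ∀ X : Matrix n n ℂ, X.IsHermitian → frobNorm (τ X) ≤ frobNorm X) {X₀ : Matrix n n ℂ}
    (hX₀ : X₀.IsHermitian) (hX₀1 : frobNorm X₀ = 1) (hτX₀ : frobNorm (τ X₀) = 1) :
    opNorm τ = 1 := by
  have hmem : (1 : ℝ) ∈ {c | ∃ X : Matrix n n ℂ, X.IsHermitian ∧ frobNorm X ≤ 1 ∧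
      c = frobNorm (τ X)} := ⟨X₀, hX₀, hX₀1.le, hτX₀.symm⟩
  have hub : ∀ c ∈ {c | ∃ X : Matrix n n ℂ, X.IsHermitian ∧ frobNorm X ≤ 1 ∧
      c = frobNorm (τ X)}, c ≤ 1 := by
    rintro c ⟨X, hX, hX1, rfl⟩
    exact (hτ X hX).trans hX1
  exact le_antisymm (csSup_le ⟨1, hmem⟩ hub) (le_csSup ⟨1, hub⟩ hmem)

theorem sigma2_lt_of_forall_mem_tracelessHermitianBall [DecidableEq n] [Nonempty n]
    {τ : Matrix n n ℂ → Matrix m m ℂ} (hτ : Continuous τ) {r : ℝ}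
    (h : ∀ X ∈ tracelessHermitianBall n, frobNorm (τ X) < r) : sigma2 τ < r := by
  have hne : (tracelessHermitianBall n).Nonempty :=
    ⟨0, isHermitian_zero, by simp [frobNorm], by simp⟩
  exact (sigma2_le_sSup_image_tracelessHermitianBall τ).trans_lt <|
    (isCompact_tracelessHermitianBall.sSup_lt_iff_of_continuous hne
      (continuous_frobNorm.comp hτ).continuousOn r).2 h

end SingularValues

section UnitaryChannel

variable {ι n : Type*} [Fintype ι] [Fintype n] [DecidableEq n]

def unitaryChannel (t : ι → ℝ) (Q : ι → Matrix n n ℂ) : Matrix n n ℂ →ₗ[ℂ] Matrix n n ℂ :=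
  ∑ i, ((t i : ℂ) ^ 2) • (LinearMap.mulLeft ℂ (Q i) ∘ₗ LinearMap.mulRight ℂ (Q i)ᴴ)

theorem unitaryChannel_apply (t : ι → ℝ) (Q : ι → Matrix n n ℂ) (X : Matrix n n ℂ) :
    unitaryChannel t Q X = ∑ i, ((t i : ℂ) ^ 2) • (Q i * X * (Q i)ᴴ) := by
  simp [unitaryChannel, Matrix.mul_assoc]

variable {t : ι → ℝ} {Q : ι → Matrix n n ℂ}

theorem toEuclideanSpace_unitaryChannel (X : Matrix n n ℂ) :
    toEuclideanSpace (unitaryChannel t Q X) =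
      ∑ i, ((t i ^ 2 : ℝ) : ℂ) • toEuclideanSpace (Q i * X * (Q i)ᴴ) := by
  simp [unitaryChannel_apply]

theorem frobNorm_unitaryChannel_le (htsum : ∑ i, t i ^ 2 = 1) (hQ : ∀ i, (Q i)ᴴ * Q i = 1)
    (X : Matrix n n ℂ) : frobNorm (unitaryChannel t Q X) ≤ frobNorm X := by
  rw [frobNorm_eq_norm_toEuclideanSpace, frobNorm_eq_norm_toEuclideanSpace,
    toEuclideanSpace_unitaryChannel]
  calc _ ≤ ∑ i, ‖((t i ^ 2 : ℝ) : ℂ) • toEuclideanSpace (Q i * X * (Q i)ᴴ)‖ := norm_sum_le _ _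
    _ = ∑ i, t i ^ 2 * ‖toEuclideanSpace X‖ := by
        simp [norm_smul, ← frobNorm_eq_norm_toEuclideanSpace, frobNorm_mul_mul_conjTranspose (hQ _)]
    _ = ‖toEuclideanSpace X‖ := by rw [← Finset.sum_mul, htsum, one_mul]

theorem unitaryChannel_one (htsum : ∑ i, t i ^ 2 = 1) (hQ : ∀ i, Q i * (Q i)ᴴ = 1) :
    unitaryChannel t Q 1 = 1 := by
  have hsum : ∑ i, (t i : ℂ) ^ 2 = 1 := by exact_mod_cast htsum
  simp [unitaryChannel_apply, hQ, ← Finset.sum_smul, hsum]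

theorem mul_mul_conjTranspose_eq_unitaryChannel_of_frobNorm_eq (ht : ∀ i, t i ≠ 0)
    (htsum : ∑ i, t i ^ 2 = 1) (hQ : ∀ i, (Q i)ᴴ * Q i = 1) {X : Matrix n n ℂ}
    (h : frobNorm (unitaryChannel t Q X) = frobNorm X) (i : ι) :
    Q i * X * (Q i)ᴴ = unitaryChannel t Q X := by
  apply toEuclideanSpace.injective
  rw [toEuclideanSpace_unitaryChannel]
  refine eq_sum_smul_of_norm_le_norm_sum (𝕜 := ℂ)
    (a := fun j => toEuclideanSpace (Q j * X * (Q j)ᴴ))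
    (fun j _ => by have := ht j; positivity) htsum (fun j _ => le_of_eq ?_) (Finset.mem_univ i)
  beta_reduce
  rw [← frobNorm_eq_norm_toEuclideanSpace, frobNorm_mul_mul_conjTranspose (hQ j), ← h,
    frobNorm_eq_norm_toEuclideanSpace, toEuclideanSpace_unitaryChannel]
  -- the two sides differ only in the coercion `ℝ → ℂ`: `RCLike.ofReal` versus `Complex.ofReal`
  rfl

theorem opNorm_unitaryChannel [Nonempty n] (htsum : ∑ i, t i ^ 2 = 1)
    (hQ : ∀ i, (Q i)ᴴ * Q i = 1) : opNorm (unitaryChannel t Q) = 1 := by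
  set X₁ : Matrix n n ℂ := (((√(Fintype.card n))⁻¹ : ℝ) : ℂ) • 1
  have hX₁ : frobNorm X₁ = 1 := by
    rw [frobNorm_real_smul_one, abs_of_pos (by positivity)]
    exact inv_mul_cancel₀ (by positivity)
  have hτX₁ : unitaryChannel t Q X₁ = X₁ := by
    rw [map_smul, unitaryChannel_one htsum fun i => mul_eq_one_comm.1 (hQ i)]
  exact opNorm_eq_one_of_frobNorm_le (fun X _ => frobNorm_unitaryChannel_le htsum hQ X)
    (isHermitian_one.smul (Complex.conj_ofReal _)) hX₁ (by rw [hτX₁, hX₁])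

theorem frobNorm_unitaryChannel_lt_one [Nonempty n] (ht : ∀ i, t i ≠ 0)
    (htsum : ∑ i, t i ^ 2 = 1) (hQ : ∀ i, (Q i)ᴴ * Q i = 1) {i₀ : ι} (hQ₀ : Q i₀ = 1)
    (hirr : ∀ V : Submodule ℂ (n → ℂ), (∀ i, i ≠ i₀ → ∀ v ∈ V, Q i *ᵥ v ∈ V) → V = ⊥ ∨ V = ⊤)
    {X : Matrix n n ℂ} (hX : X ∈ tracelessHermitianBall n) :
    frobNorm (unitaryChannel t Q X) < 1 := by
  obtain ⟨hXh, hX1, htr⟩ := hX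
  rcases hX1.lt_or_eq with hlt | hX1
  · exact (frobNorm_unitaryChannel_le htsum hQ X).trans_lt hlt
  rw [← hX1]
  refine (frobNorm_unitaryChannel_le htsum hQ X).lt_of_ne fun h => ?_
  have hconj := mul_mul_conjTranspose_eq_unitaryChannel_of_frobNorm_eq ht htsum hQ h
  have hfix : ∀ i, Q i * X * (Q i)ᴴ = X := fun i => by
    rw [hconj, ← hconj i₀, hQ₀, conjTranspose_one, Matrix.mul_one, Matrix.one_mul]
  have hX0 : X = 0 := hXh.eq_zero_of_forall_commute (Q := fun i : {i // i ≠ i₀} => Q i)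
    (fun V hV => hirr V fun i hi => hV ⟨i, hi⟩) htr
    (fun i => commute_of_mul_mul_conjTranspose_eq (hQ i) (hfix i))
  simp [hX0, frobNorm] at hX1

theorem sigma2_unitaryChannel_lt_one [Nonempty n] (ht : ∀ i, t i ≠ 0)
    (htsum : ∑ i, t i ^ 2 = 1) (hQ : ∀ i, (Q i)ᴴ * Q i = 1) {i₀ : ι} (hQ₀ : Q i₀ = 1)
    (hirr : ∀ V : Submodule ℂ (n → ℂ), (∀ i, i ≠ i₀ → ∀ v ∈ V, Q i *ᵥ v ∈ V) → V = ⊥ ∨ V = ⊤) :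
    sigma2 (unitaryChannel t Q) < 1 :=
  sigma2_lt_of_forall_mem_tracelessHermitianBall (LinearMap.continuous_of_finiteDimensional _)
    fun _ hX => frobNorm_unitaryChannel_lt_one ht htsum hQ hQ₀ hirr hX

end UnitaryChannel

/-- Let τ(X) = ∑ᵢ tᵢ² Qᵢ X Qᵢ* be a unitary quantum channel with l ≥ 3,
tᵢ ≠ 0 for all i, ∑ᵢ tᵢ² = 1, Q₁ = Iₙ, all Qᵢ unitary, and suppose Q₂,…,Q_l have no
common invariant subspace other than {0} and ℂⁿ.  Then σ₂(τ) < σ₁(τ) = 1. -/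
theorem stmt_19 {n l : ℕ} (hn : 0 < n) (hl : 3 ≤ l)
    (t : Fin l → ℝ) (Q : Fin l → Matrix (Fin n) (Fin n) ℂ)
    (ht : ∀ i, t i ≠ 0) (htsum : ∑ i, t i ^ 2 = 1)
    (hQ : ∀ i, (Q i)ᴴ * Q i = 1 ∧ Q i * (Q i)ᴴ = 1)
    (hQ0 : Q ⟨0, by omega⟩ = 1)
    (hinv : ∀ V : Submodule ℂ (Fin n → ℂ),
      (∀ i : Fin l, (i : ℕ) ≠ 0 → ∀ v ∈ V, (Q i).mulVec v ∈ V) → V = ⊥ ∨ V = ⊤) :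
    sigma2 (fun X => ∑ i, ((t i : ℂ) ^ 2) • (Q i * X * (Q i)ᴴ)) <
        opNorm (fun X => ∑ i, ((t i : ℂ) ^ 2) • (Q i * X * (Q i)ᴴ)) ∧
      opNorm (fun X => ∑ i, ((t i : ℂ) ^ 2) • (Q i * X * (Q i)ᴴ)) = 1 := by
  have : Nonempty (Fin n) := ⟨⟨0, hn⟩⟩
  have hτ : (fun X => ∑ i, ((t i : ℂ) ^ 2) • (Q i * X * (Q i)ᴴ)) = unitaryChannel t Q :=
    funext fun X => (unitaryChannel_apply t Q X).symm
  have hQ' : ∀ i, (Q i)ᴴ * Q i = 1 := fun i => (hQ i).1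
  rw [hτ, opNorm_unitaryChannel htsum hQ']
  refine ⟨sigma2_unitaryChannel_lt_one ht htsum hQ' hQ0 fun V hV => hinv V fun i hi => ?_, rfl⟩
  exact hV i fun h => hi (congrArg Fin.val h)
end
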